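/- Let R = 2k be an even positive integer, let θ₁,…,θ_k and φ₁,…,φ_k be real angles, and normalize by 1/√2. For complex numbers u, v on the unit circle define the codeword C(u,v) = (1/√2)·diag(M(e^{iθ₁}u, e^{iφ₁}v), …, M(e^{iθ_k}u, e^{iφ_k}v)). Then: (a) C(u,v) is unitary for every u, v with |u| = |v| = 1; and (b) for any u, v, u′, v′ on the unit circle with (u,v) ≠ (u′,v′), the difference C(u,v) − C(u′,v′) is invertible. -/

import Mathlib

/-!
Each block of the codeword is an Alamouti matrix `M(s, t)`, for which
`M(s,t) M(s,t)ᴴ = (|s|² + |t|²) I` and `det M(s,t) = |s|² + |t|²`. The rotations preserve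
moduli, so after the `1/√2` scaling every block has `|s|² + |t|² = 1` and the block-diagonal
codeword is unitary. The code is linear in `(u, v)`, so the difference of two codewords is the
codeword of `(u - u', v - v')`, whose blocks have determinant `(|u - u'|² + |v - v'|²) / 2 ≠ 0`.
-/

open Matrix

/-- The Alamouti block: the 2×2 complex matrix with rows `(s, -conj t)` and `(t, conj s)`. -/
def alamouti (s t : ℂ) : Matrix (Fin 2) (Fin 2) ℂ :=
  !![s, -(starRingEnd ℂ) t; t, (starRingEnd ℂ) s]

/-- The 2-group decodable PCIOD codeword for symbols `u, v` on the unit circle with rotation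
angles `θᵢ, φᵢ`, scaled by `1/√2`. -/
noncomputable def pciodCodeword (k : ℕ) (θ φ : Fin k → ℝ) (u v : ℂ) :
    Matrix (Fin 2 × Fin k) (Fin 2 × Fin k) ℂ :=
  ((1 / Real.sqrt 2 : ℝ) : ℂ) •
    Matrix.blockDiagonal fun i =>
      alamouti (Complex.exp (θ i * Complex.I) * u) (Complex.exp (φ i * Complex.I) * v)

open Complex

section BlockDiagonal

variable {m o α : Type*} [Fintype m] [DecidableEq m] [Fintype o] [DecidableEq o]

theorem Matrix.blockDiagonal_mem_unitaryGroup [CommRing α] [StarRing α]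
    {M : o → Matrix m m α} (hM : ∀ i, M i ∈ unitaryGroup m α) :
    blockDiagonal M ∈ unitaryGroup (m × o) α := by
  rw [mem_unitaryGroup_iff, star_eq_conjTranspose, blockDiagonal_conjTranspose,
    ← blockDiagonal_mul, ← blockDiagonal_one]
  exact congrArg blockDiagonal (funext fun i => mem_unitaryGroup_iff.mp (hM i))

theorem Matrix.isUnit_blockDiagonal [CommRing α] {M : o → Matrix m m α}
    (hM : ∀ i, IsUnit (M i)) : IsUnit (blockDiagonal M) :=
  (Pi.isUnit_iff.mpr hM).map (blockDiagonalRingHom m o α)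

end BlockDiagonal

theorem alamouti_mul_conjTranspose_self (s t : ℂ) :
    alamouti s t * (alamouti s t)ᴴ = ((normSq s + normSq t : ℝ) : ℂ) • 1 := by
  ext i j
  fin_cases i <;> fin_cases j <;>
    simp [alamouti, mul_apply, Fin.sum_univ_two, ← mul_conj] <;> ring

theorem det_alamouti (s t : ℂ) : (alamouti s t).det = ((normSq s + normSq t : ℝ) : ℂ) := by
  simp [alamouti, det_fin_two_of, ← mul_conj]
  ring

theorem alamouti_mem_unitaryGroup {s t : ℂ} (h : normSq s + normSq t = 1) :
    alamouti s t ∈ unitaryGroup (Fin 2) ℂ := by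
  rw [mem_unitaryGroup_iff, star_eq_conjTranspose, alamouti_mul_conjTranspose_self, h]
  simp

theorem isUnit_alamouti {s t : ℂ} (h : s ≠ 0 ∨ t ≠ 0) : IsUnit (alamouti s t) := by
  have hpos : 0 < normSq s + normSq t := by
    rcases h with hs | ht
    · exact add_pos_of_pos_of_nonneg (normSq_pos.mpr hs) (normSq_nonneg t)
    · exact add_pos_of_nonneg_of_pos (normSq_nonneg s) (normSq_pos.mpr ht)
  rw [isUnit_iff_isUnit_det, det_alamouti, isUnit_iff_ne_zero, ofReal_ne_zero]
  exact hpos.ne'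

theorem alamouti_sub_alamouti (s t s' t' : ℂ) :
    alamouti s t - alamouti s' t' = alamouti (s - s') (t - t') := by
  ext i j
  fin_cases i <;> fin_cases j <;> simp [alamouti, sub_eq_add_neg, add_comm]

theorem ofReal_smul_alamouti (r : ℝ) (s t : ℂ) :
    (r : ℂ) • alamouti s t = alamouti (r * s) (r * t) := by
  ext i j
  fin_cases i <;> fin_cases j <;> simp [alamouti]

section PciodCodeword

variable (k : ℕ) (θ φ : Fin k → ℝ)

theorem pciodCodeword_eq_blockDiagonal (u v : ℂ) :
    pciodCodeword k θ φ u v = blockDiagonal fun i =>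
      alamouti ((1 / √2 : ℝ) * (exp (θ i * I) * u))
        ((1 / √2 : ℝ) * (exp (φ i * I) * v)) := by
  simp only [pciodCodeword, ← blockDiagonal_smul, Pi.smul_def, ofReal_smul_alamouti]

theorem pciodCodeword_sub_pciodCodeword (u v u' v' : ℂ) :
    pciodCodeword k θ φ u v - pciodCodeword k θ φ u' v' =
      pciodCodeword k θ φ (u - u') (v - v') := by
  simp only [pciodCodeword, ← smul_sub, ← blockDiagonal_sub, Pi.sub_def, alamouti_sub_alamouti,
    mul_sub]

theorem pciodCodeword_mem_unitaryGroup {u v : ℂ} (hu : ‖u‖ = 1) (hv : ‖v‖ = 1) :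
    pciodCodeword k θ φ u v ∈ unitaryGroup (Fin 2 × Fin k) ℂ := by
  rw [pciodCodeword_eq_blockDiagonal]
  refine blockDiagonal_mem_unitaryGroup fun i => alamouti_mem_unitaryGroup ?_
  norm_num [normSq_eq_norm_sq, norm_exp_ofReal_mul_I, hu, hv]

theorem isUnit_pciodCodeword {u v : ℂ} (h : u ≠ 0 ∨ v ≠ 0) :
    IsUnit (pciodCodeword k θ φ u v) := by
  rw [pciodCodeword_eq_blockDiagonal]
  have hc : ((1 / √2 : ℝ) : ℂ) ≠ 0 := by simp
  refine isUnit_blockDiagonal fun i => isUnit_alamouti ?_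
  simpa [hc, exp_ne_zero] using h

end PciodCodeword

theorem pciod_code_unitary_and_fully_diverse_general (k : ℕ) (θ φ : Fin k → ℝ) :
    (∀ u v : ℂ, ‖u‖ = 1 → ‖v‖ = 1 →
        (pciodCodeword k θ φ u v)ᴴ * pciodCodeword k θ φ u v = 1 ∧
        pciodCodeword k θ φ u v * (pciodCodeword k θ φ u v)ᴴ = 1) ∧
      (∀ u v u' v' : ℂ, ‖u‖ = 1 → ‖v‖ = 1 →
        ‖u'‖ = 1 → ‖v'‖ = 1 → (u, v) ≠ (u', v') →
        IsUnit (pciodCodeword k θ φ u v - pciodCodeword k θ φ u' v')) := by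
  refine ⟨fun u v hu hv => ?_, fun u v u' v' _ _ _ _ hne => ?_⟩
  · have hU := pciodCodeword_mem_unitaryGroup k θ φ hu hv
    exact ⟨mem_unitaryGroup_iff'.mp hU, mem_unitaryGroup_iff.mp hU⟩
  · rw [pciodCodeword_sub_pciodCodeword]
    refine isUnit_pciodCodeword k θ φ ?_
    by_contra! h
    exact hne (Prod.ext (sub_eq_zero.mp h.1) (sub_eq_zero.mp h.2))

/-- (a) Each codeword `C(u,v)` with `|u| = |v| = 1` is unitary, and (b) the difference of two
distinct codewords is invertible (full diversity). -/
theorem pciod_code_unitary_and_fully_diverse (k : ℕ) (hk : 0 < k) (θ φ : Fin k → ℝ) :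
    (∀ u v : ℂ, ‖u‖ = 1 → ‖v‖ = 1 →
        (pciodCodeword k θ φ u v)ᴴ * pciodCodeword k θ φ u v = 1 ∧
        pciodCodeword k θ φ u v * (pciodCodeword k θ φ u v)ᴴ = 1) ∧
      (∀ u v u' v' : ℂ, ‖u‖ = 1 → ‖v‖ = 1 →
        ‖u'‖ = 1 → ‖v'‖ = 1 → (u, v) ≠ (u', v') →
        IsUnit (pciodCodeword k θ φ u v - pciodCodeword k θ φ u' v')) :=
  pciod_code_unitary_and_fully_diverse_general k θ φ
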